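/- Let A be a finite-dimensional simple algebra over a field F with char(F) ≠ 2. If an element c ∈ A satisfies xcx ∈ [A,A] for every x ∈ A, then c = 0. -/

import Mathlib

/-! Polarizing `x ↦ x * c * x` and dividing by `2` shows that `x * c * y ∈ [A, A]` for all
`x, y`, so `[A, A]` contains the two-sided ideal generated by `c`, which is `A` if `c ≠ 0`.
But `[A, A]` is a proper subspace of any nonzero finite-dimensional algebra: over an algebraic
closure `K`, Wedderburn–Artin applied to the semisimple quotient of `K ⊗ A` by its Jacobson
radical yields a surjection `K ⊗ A → Mₙ(K)` with `n ≥ 1`, and the trace kills commutators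
but not the matrix unit `E₁₁`. -/

open TensorProduct

section CommutatorSpan

variable (F A : Type*) [CommRing F] [Ring A] [Algebra F A]

def commutatorSpan : Submodule F A :=
  Submodule.span F {z | ∃ u v : A, z = u * v - v * u}

variable {F A}

theorem commutator_mem_commutatorSpan (u v : A) : u * v - v * u ∈ commutatorSpan F A :=
  Submodule.subset_span ⟨u, v, rfl⟩

theorem commutatorSpan_le_ker {M : Type*} [AddCommGroup M] [Module F M] (f : A →ₗ[F] M)
    (hf : ∀ u v, f (u * v) = f (v * u)) : commutatorSpan F A ≤ LinearMap.ker f :=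
  Submodule.span_le.mpr fun _ ⟨u, v, huv⟩ ↦ by simp [huv, hf u v]

theorem map_commutatorSpan_le {B : Type*} [Ring B] [Algebra F B] (f : A →ₐ[F] B) :
    (commutatorSpan F A).map f.toLinearMap ≤ commutatorSpan F B := by
  rw [commutatorSpan, Submodule.map_span_le]
  rintro _ ⟨u, v, rfl⟩
  simpa using commutator_mem_commutatorSpan (f u) (f v)

theorem commutatorSpan_eq_top_of_surjective {B : Type*} [Ring B] [Algebra F B] (f : A →ₐ[F] B)
    (hf : Function.Surjective f) (h : commutatorSpan F A = ⊤) : commutatorSpan F B = ⊤ := by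
  rw [eq_top_iff, ← LinearMap.range_eq_top.mpr (show Function.Surjective f.toLinearMap from hf),
    LinearMap.range_eq_map, ← h]
  exact map_commutatorSpan_le f

theorem baseChange_commutatorSpan_le (K : Type*) [CommRing K] [Algebra F K] :
    (commutatorSpan F A).baseChange K ≤ commutatorSpan K (K ⊗[F] A) := by
  rw [commutatorSpan, Submodule.baseChange_span, Submodule.span_le]
  rintro _ ⟨_, ⟨u, v, rfl⟩, rfl⟩
  convert commutator_mem_commutatorSpan (F := K) ((1 : K) ⊗ₜ[F] u) (1 ⊗ₜ v) using 1
  simp [tmul_sub]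

end CommutatorSpan

theorem Matrix.commutatorSpan_ne_top {n K : Type*} [Fintype n] [DecidableEq n] [Nonempty n]
    [Field K] : commutatorSpan K (Matrix n n K) ≠ ⊤ := by
  obtain ⟨i⟩ := ‹Nonempty n›
  intro h
  have hle := commutatorSpan_le_ker (traceLinearMap n K K) trace_mul_comm
  simpa using hle (h ▸ Submodule.mem_top : single i i (1 : K) ∈ commutatorSpan K _)

theorem commutatorSpan_ne_top_of_isAlgClosed (K B : Type*) [Field K] [IsAlgClosed K] [Ring B]
    [Algebra K B] [FiniteDimensional K B] [Nontrivial B] : commutatorSpan K B ≠ ⊤ := by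
  have : IsArtinianRing B := IsArtinianRing.of_finite K B
  obtain ⟨n, d, hd, ⟨e⟩⟩ :=
    IsSemisimpleRing.exists_algEquiv_pi_matrix_of_isAlgClosed K (B ⧸ Ring.jacobson B)
  have : Nontrivial (B ⧸ Ring.jacobson B) :=
    Ideal.Quotient.nontrivial_iff.mpr (Ring.jacobson_lt_top B).ne
  obtain ⟨i⟩ : Nonempty (Fin n) := by
    by_contra! hn
    exact not_subsingleton _ e.toEquiv.subsingleton
  have := hd i
  let f := (Pi.evalAlgHom K _ i).comp (e.toAlgHom.comp (Ideal.Quotient.mkₐ K (Ring.jacobson B)))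
  have hf : Function.Surjective f :=
    (Function.surjective_eval i).comp (e.surjective.comp Ideal.Quotient.mk_surjective)
  exact fun h ↦ Matrix.commutatorSpan_ne_top (commutatorSpan_eq_top_of_surjective f hf h)

theorem commutatorSpan_ne_top (F A : Type*) [Field F] [Ring A] [Algebra F A]
    [FiniteDimensional F A] [Nontrivial A] : commutatorSpan F A ≠ ⊤ := by
  intro h
  apply commutatorSpan_ne_top_of_isAlgClosed (AlgebraicClosure F) (AlgebraicClosure F ⊗[F] A)
  rw [eq_top_iff, ← Submodule.baseChange_top, ← h]
  exact baseChange_commutatorSpan_le _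

theorem IsSimpleRing.eq_top_of_mul_mul_mem {F A : Type*} [Ring F] [Ring A] [IsSimpleRing A]
    [Module F A] {S : Submodule F A} {c : A} (hc : c ≠ 0) (h : ∀ x y, x * c * y ∈ S) : S = ⊤ := by
  let I : TwoSidedIdeal A := .mk' {a | ∀ x y, x * a * y ∈ S} (by simp)
    (fun ha hb x y ↦ by simpa [mul_add, add_mul] using S.add_mem (ha x y) (hb x y))
    (fun ha x y ↦ by simpa using S.neg_mem (ha x y))
    (fun {a b} hb x y ↦ by simpa [mul_assoc] using hb (x * a) y)
    (fun {a b} ha x y ↦ by simpa [mul_assoc] using ha x (b * y))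
  have hcI : c ∈ I := (TwoSidedIdeal.mem_mk' ..).mpr h
  have hI : I = ⊤ := (eq_bot_or_eq_top I).resolve_left fun hI ↦ hc (by simpa [hI] using hcI)
  refine eq_top_iff.mpr fun a _ ↦ ?_
  have haI : a ∈ I := hI ▸ TwoSidedIdeal.mem_top A
  simpa using (TwoSidedIdeal.mem_mk' ..).mp haI 1 1

section Polarization

variable {F A : Type*} [Field F] [Ring A] [Algebra F A] {c : A}

theorem mul_add_mul_mem_commutatorSpan (h : ∀ x : A, x * c * x ∈ commutatorSpan F A) (x : A) :
    x * c + c * x ∈ commutatorSpan F A := by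
  have hx : x * c + c * x = (x + 1) * c * (x + 1) - x * c * x - 1 * c * 1 := by noncomm_ring
  rw [hx]
  exact sub_mem (sub_mem (h (x + 1)) (h x)) (h 1)

theorem mul_mem_commutatorSpan (h : ∀ x : A, x * c * x ∈ commutatorSpan F A)
    (h2 : (2 : F) ≠ 0) (x : A) : x * c ∈ commutatorSpan F A := by
  have h2x : (2 : F) • (x * c) = (x * c + c * x) + (x * c - c * x) := by
    rw [two_smul]; noncomm_ring
  have := add_mem (mul_add_mul_mem_commutatorSpan h x) (commutator_mem_commutatorSpan x c)
  rw [← h2x] at this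
  simpa [smul_smul, inv_mul_cancel₀ h2] using Submodule.smul_mem _ (2 : F)⁻¹ this

theorem mul_mul_mem_commutatorSpan (h : ∀ x : A, x * c * x ∈ commutatorSpan F A)
    (h2 : (2 : F) ≠ 0) (x y : A) : x * c * y ∈ commutatorSpan F A := by
  have hxy : x * c * y = (x * (c * y) - c * y * x) + ((y * x * c + c * (y * x)) - y * x * c) := by
    noncomm_ring
  rw [hxy]
  exact add_mem (commutator_mem_commutatorSpan _ _)
    (sub_mem (mul_add_mul_mem_commutatorSpan h _) (mul_mem_commutatorSpan h h2 _))

end Polarization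

/-- Let `A` be a finite-dimensional simple algebra over a field `F` with `char F ≠ 2`.
If `c ∈ A` satisfies `x * c * x ∈ [A,A]` for every `x ∈ A`, then `c = 0`. -/
theorem eq_zero_of_conj_mem_commutator_span (F A : Type*) [Field F] [Ring A] [Algebra F A]
    [FiniteDimensional F A] [IsSimpleRing A] (h2 : (2 : F) ≠ 0) (c : A)
    (h : ∀ x : A, x * c * x ∈ Submodule.span F {z : A | ∃ u v : A, z = u * v - v * u}) :
    c = 0 := by
  by_contra hc
  exact commutatorSpan_ne_top F A
    (IsSimpleRing.eq_top_of_mul_mul_mem hc (mul_mul_mem_commutatorSpan h h2))
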